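/- arXiv:1905.10772 — 6 statements merged into one kernel-verified Lean document; each statement's English description precedes it below -/
import Mathlib

section
/- Let Ω be an algebraically closed field containing F, and let a ∈ F with a ≠ 0. Then the quintic polynomial H = (C−A)(D−B)(E−C)(A−D)(B−E) − a·(B−A)(C−B)(D−C)(E−D)(A−E), regarded as an element of the polynomial ring over Ω in the five variables A, B, C, D, E, is irreducible. -/
/-!
Substituting `(A, B, C, D, E) ↦ (0, x, y, z, z + 1)` maps `H` to a polynomial of the same total
degree 5 which, as a quadratic in `x` over `K[y, z]`, is Eisenstein at the prime `y`; it is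
primitive because no prime factor of its constant coefficient `y z² (z + 1) (z + 1 - y)` divides
its leading coefficient, as one sees by specialising `(y, z)` to a point of that factor's zero
locus over `K[t]`. A substitution by polynomials of degree at most one cannot raise
total degrees, so in a factorisation `H = g * h` the factor whose image is a unit has degree 0:
it is a nonzero constant.
-/

open MvPolynomial
open scoped Polynomial

namespace MvPolynomial

variable {σ τ R : Type*}

theorem totalDegree_aeval_le [CommSemiring R] {f : σ → MvPolynomial τ R}
    (hf : ∀ i, (f i).totalDegree ≤ 1) (p : MvPolynomial σ R) :
    (aeval f p).totalDegree ≤ p.totalDegree := by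
  rw [aeval_eq_eval₂Hom, coe_eval₂Hom, eval₂_eq]
  refine (totalDegree_finsetSum _ _).trans (Finset.sup_le fun d hd => ?_)
  calc (algebraMap R _ (coeff d p) * ∏ i ∈ d.support, f i ^ d i).totalDegree
      ≤ 0 + ∑ i ∈ d.support, d i * 1 := by
        refine (totalDegree_mul _ _).trans (add_le_add (totalDegree_C _).le ?_)
        refine (totalDegree_finsetProd _ _).trans (Finset.sum_le_sum fun i _ => ?_)
        exact (totalDegree_pow _ _).trans (Nat.mul_le_mul_left _ (hf i))
    _ = d.degree := by simp [Finsupp.degree_apply]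
    _ ≤ p.totalDegree := le_totalDegree hd

theorem irreducible_of_irreducible_aeval [CommRing R] [IsDomain R] {f : σ → MvPolynomial τ R}
    (hf : ∀ i, (f i).totalDegree ≤ 1) {p : MvPolynomial σ R}
    (hdeg : p.totalDegree ≤ (aeval f p).totalDegree) (hirr : Irreducible (aeval f p)) :
    Irreducible p := by
  have hp : p ≠ 0 := by rintro rfl; exact hirr.ne_zero (map_zero _)
  have isUnit_of_isUnit_aeval : ∀ g h, p = g * h → IsUnit (aeval f g) → IsUnit g := by
    intro g h hgh hg
    have hg0 : g ≠ 0 := by rintro rfl; simp [hgh] at hp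
    have hh0 : h ≠ 0 := by rintro rfl; simp [hgh] at hp
    have hg_deg : g.totalDegree = 0 := by
      have himage := (totalDegree_mul (aeval f g) (aeval f h)).trans
        (add_le_add (isUnit_iff_totalDegree_of_isReduced.mp hg).2.le (totalDegree_aeval_le hf h))
      have hsum := totalDegree_mul_of_isDomain hg0 hh0
      rw [← map_mul, ← hgh] at himage
      rw [← hgh] at hsum
      omega
    rw [totalDegree_eq_zero_iff_eq_C] at hg_deg
    rw [hg_deg, aeval_C, algebraMap_eq, isUnit_iff_totalDegree_of_isReduced] at hg
    rw [hg_deg]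
    simpa using hg.1
  refine ⟨fun hu => hirr.not_isUnit (hu.map _), fun g h hgh => ?_⟩
  rcases hirr.isUnit_or_isUnit (by rw [hgh, map_mul]) with hg | hh
  · exact .inl (isUnit_of_isUnit_aeval g h hgh hg)
  · exact .inr (isUnit_of_isUnit_aeval h g (hgh.trans (mul_comm g h)) hh)

end MvPolynomial

theorem Polynomial.X_add_one_ne_zero {R : Type*} [Semiring R] [Nontrivial R] :
    (Polynomial.X + 1 : R[X]) ≠ 0 := by
  simpa using Polynomial.X_add_C_ne_zero (1 : R)

theorem not_dvd_of_map_eq_zero {F R S : Type*} [CommMonoidWithZero R] [CommMonoidWithZero S]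
    [FunLike F R S] [MonoidWithZeroHomClass F R S] (φ : F) {q c : R} (hq : φ q = 0)
    (hc : φ c ≠ 0) : ¬q ∣ c := fun h => hc (zero_dvd_iff.mp (hq ▸ map_dvd φ h))

section Quintic

variable {K : Type*} [Field K]

noncomputable def quintic (a : K) : MvPolynomial (Fin 5) K :=
  (X 2 - X 0) * (X 3 - X 1) * (X 4 - X 2) * (X 0 - X 3) * (X 1 - X 4)
    - C a * ((X 1 - X 0) * (X 2 - X 1) * (X 3 - X 2) * (X 4 - X 3) * (X 0 - X 4))

theorem isHomogeneous_quintic (a : K) : (quintic a).IsHomogeneous 5 := by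
  have h : ∀ i j : Fin 5, (X i - X j : MvPolynomial (Fin 5) K).IsHomogeneous 1 :=
    fun i j => (isHomogeneous_X K i).sub (isHomogeneous_X K j)
  exact (((((h 2 0).mul (h 3 1)).mul (h 4 2)).mul (h 0 3)).mul (h 1 4)).sub
    ((((((h 1 0).mul (h 2 1)).mul (h 3 2)).mul (h 4 3)).mul (h 0 4)).C_mul a)

-- `X 0, X 1, X 2` play the roles of `x, y, z`.
variable (K) in
noncomputable def quinticSlice : Fin 5 → MvPolynomial (Fin 3) K :=
  ![0, X 0, X 1, X 2, X 2 + 1]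

theorem totalDegree_quinticSlice_le (i : Fin 5) :
    (quinticSlice K i).totalDegree ≤ 1 := by
  fin_cases i <;> simp [quinticSlice]
  exact (totalDegree_add _ _).trans (by simp)

/- The coefficients of the sliced quintic as a quadratic in `x`; in `MvPolynomial (Fin 2) K`
the variables `X 0, X 1` are `y, z`. -/
noncomputable def sliceCoeff₂ (a : K) : MvPolynomial (Fin 2) K :=
  X 0 * X 1 * (X 1 + 1 - X 0) - C a * (X 1 + 1) * (X 1 - X 0)

noncomputable def sliceCoeff₁ (a : K) : MvPolynomial (Fin 2) K :=
  X 0 * (C a * (X 1 + 1) * (X 1 - X 0) - (2 * X 1 + 1) * X 1 * (X 1 + 1 - X 0))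

noncomputable def sliceCoeff₀ : MvPolynomial (Fin 2) K :=
  X 0 * (X 1 ^ 2 * (X 1 + 1) * (X 1 + 1 - X 0))

theorem finSuccEquiv_aeval_quinticSlice (a : K) :
    finSuccEquiv K 2 (aeval (quinticSlice K) (quintic a)) =
      Polynomial.C (sliceCoeff₂ a) * Polynomial.X ^ 2
        + Polynomial.C (sliceCoeff₁ a) * Polynomial.X + Polynomial.C sliceCoeff₀ := by
  have h₁ : finSuccEquiv K 2 (X 1) = Polynomial.C (X 0) :=
    finSuccEquiv_X_succ (R := K) (n := 2) (j := 0)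
  have h₂ : finSuccEquiv K 2 (X 2) = Polynomial.C (X 1) :=
    finSuccEquiv_X_succ (R := K) (n := 2) (j := 1)
  have hC : finSuccEquiv K 2 (C a) = Polynomial.C (C a) := by simp [finSuccEquiv_apply]
  simp [quintic, quinticSlice, sliceCoeff₂, sliceCoeff₁, sliceCoeff₀, h₁, h₂, hC,
    finSuccEquiv_X_zero, Polynomial.C_ofNat]
  ring

theorem irreducible_X_one_add_one : Irreducible (X 1 + 1 : MvPolynomial (Fin 2) K) := by
  simpa using irreducible_mul_X_add (1 : MvPolynomial (Fin 2) K) 1 1 one_ne_zero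
    (by simp) (by simp) isRelPrime_one_left

theorem irreducible_X_one_add_one_sub_X_zero :
    Irreducible (X 1 + 1 - X 0 : MvPolynomial (Fin 2) K) := by
  have h := irreducible_mul_X_add (-1 : MvPolynomial (Fin 2) K) (X 1 + 1) 0 (by simp)
    (by simp) (by simp [vars_add_of_disjoint]) isRelPrime_one_left.neg_left
  convert h using 1
  ring

theorem totalDegree_sliceCoeff₀ : (sliceCoeff₀ : MvPolynomial (Fin 2) K).totalDegree = 5 := by
  have h₁ : (X 1 + 1 : MvPolynomial (Fin 2) K).totalDegree = 1 := by
    rw [totalDegree_add_eq_left_of_totalDegree_lt] <;> simp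
  have h₂ : (X 1 + 1 - X 0 : MvPolynomial (Fin 2) K).totalDegree = 1 := by
    have hom : (X 1 - X 0 : MvPolynomial (Fin 2) K).IsHomogeneous 1 :=
      (isHomogeneous_X K 1).sub (isHomogeneous_X K 0)
    rw [add_sub_right_comm, totalDegree_add_eq_left_of_totalDegree_lt] <;>
      rw [hom.totalDegree (sub_ne_zero.mpr ((X_injective (σ := Fin 2) (R := K)).ne (by decide)))]
    simp
  rw [sliceCoeff₀, totalDegree_mul_of_isDomain, totalDegree_mul_of_isDomain,
    totalDegree_mul_of_isDomain, h₁, h₂]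
  all_goals simp [irreducible_X_one_add_one.ne_zero, irreducible_X_one_add_one_sub_X_zero.ne_zero]

theorem five_le_totalDegree_aeval_quinticSlice (a : K) :
    5 ≤ (aeval (quinticSlice K) (quintic a)).totalDegree := by
  have hne : (sliceCoeff₀ : MvPolynomial (Fin 2) K) ≠ 0 := by
    intro h0
    simpa [h0] using totalDegree_sliceCoeff₀ (K := K)
  have h := totalDegree_coeff_finSuccEquiv_add_le (aeval (quinticSlice K) (quintic a)) 0
  rw [finSuccEquiv_aeval_quinticSlice] at h
  simpa [totalDegree_sliceCoeff₀] using h (by simpa using hne)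

variable {a : K}

theorem not_X_zero_dvd_sliceCoeff₂ (ha : a ≠ 0) : ¬X 0 ∣ sliceCoeff₂ a :=
  not_dvd_of_map_eq_zero (aeval ![0, (Polynomial.X : K[X])]) (by simp)
    (by simp [sliceCoeff₂, ha, Polynomial.X_add_one_ne_zero])

theorem not_X_one_dvd_sliceCoeff₂ (ha : a ≠ 0) : ¬X 1 ∣ sliceCoeff₂ a :=
  not_dvd_of_map_eq_zero (aeval ![(Polynomial.X : K[X]), 0]) (by simp)
    (by simp [sliceCoeff₂, ha])

theorem not_X_one_add_one_dvd_sliceCoeff₂ : ¬X 1 + 1 ∣ sliceCoeff₂ a :=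
  not_dvd_of_map_eq_zero (aeval ![(Polynomial.X : K[X]), -1]) (by simp)
    (by simp [sliceCoeff₂])

theorem not_X_one_add_one_sub_X_zero_dvd_sliceCoeff₂ (ha : a ≠ 0) :
    ¬X 1 + 1 - X 0 ∣ sliceCoeff₂ a :=
  not_dvd_of_map_eq_zero (aeval ![Polynomial.X + 1, (Polynomial.X : K[X])]) (by simp)
    (by simp [sliceCoeff₂, ha, Polynomial.X_add_one_ne_zero])

theorem isRelPrime_sliceCoeff₂_sliceCoeff₀ (ha : a ≠ 0) :
    IsRelPrime (sliceCoeff₂ a) (sliceCoeff₀ : MvPolynomial (Fin 2) K) := by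
  have rel {ℓ : MvPolynomial (Fin 2) K} (hℓ : Irreducible ℓ) (h : ¬ℓ ∣ sliceCoeff₂ a) :
      IsRelPrime (sliceCoeff₂ a) ℓ := (hℓ.isRelPrime_iff_not_dvd.mpr h).symm
  exact (rel X_prime.irreducible (not_X_zero_dvd_sliceCoeff₂ ha)).mul_right
    ((((rel X_prime.irreducible (not_X_one_dvd_sliceCoeff₂ ha)).pow_right).mul_right
      (rel irreducible_X_one_add_one not_X_one_add_one_dvd_sliceCoeff₂)).mul_right
      (rel irreducible_X_one_add_one_sub_X_zero
        (not_X_one_add_one_sub_X_zero_dvd_sliceCoeff₂ ha)))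

theorem not_X_zero_sq_dvd_sliceCoeff₀ :
    ¬(X 0 ^ 2 : MvPolynomial (Fin 2) K) ∣ sliceCoeff₀ := by
  rw [sliceCoeff₀, sq, mul_dvd_mul_iff_left (X_ne_zero _)]
  exact not_dvd_of_map_eq_zero (aeval ![0, (Polynomial.X : K[X])]) (by simp)
    (by simp [Polynomial.X_add_one_ne_zero])

theorem irreducible_quadratic_sliceCoeff (ha : a ≠ 0) :
    Irreducible (Polynomial.C (sliceCoeff₂ a) * Polynomial.X ^ 2
      + Polynomial.C (sliceCoeff₁ a) * Polynomial.X + Polynomial.C sliceCoeff₀) := by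
  have h₂ : sliceCoeff₂ a ≠ 0 := fun h => not_X_zero_dvd_sliceCoeff₂ ha (h ▸ dvd_zero _)
  refine Polynomial.irreducible_of_eisenstein_criterion
    ((Ideal.span_singleton_prime (X_ne_zero 0)).mpr X_prime) ?_ ?_ ?_ ?_ ?_
  · rw [Polynomial.leadingCoeff_quadratic h₂, Ideal.mem_span_singleton]
    exact not_X_zero_dvd_sliceCoeff₂ ha
  · intro n hn
    rw [Polynomial.degree_quadratic h₂] at hn
    have hn' : n < 2 := by exact_mod_cast hn
    rw [Ideal.mem_span_singleton]
    interval_cases n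
    · simp [sliceCoeff₀]
    · simp [sliceCoeff₁]
  · rw [Polynomial.degree_quadratic h₂]; norm_num
  · rw [Ideal.span_singleton_pow, Ideal.mem_span_singleton]
    simpa using not_X_zero_sq_dvd_sliceCoeff₀
  · intro r hr
    rw [Polynomial.C_dvd_iff_dvd_coeff] at hr
    exact isRelPrime_sliceCoeff₂_sliceCoeff₀ ha (by simpa using hr 2) (by simpa using hr 0)

theorem irreducible_quintic (ha : a ≠ 0) : Irreducible (quintic a) := by
  have hslice : Irreducible (aeval (quinticSlice K) (quintic a)) := by
    rw [← MulEquiv.irreducible_iff (finSuccEquiv K 2), finSuccEquiv_aeval_quinticSlice]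
    exact irreducible_quadratic_sliceCoeff ha
  exact irreducible_of_irreducible_aeval totalDegree_quinticSlice_le
    ((isHomogeneous_quintic a).totalDegree_le.trans (five_le_totalDegree_aeval_quinticSlice a))
    hslice

end Quintic

open MvPolynomial in
theorem stmt_2_general
    (Ω : Type*) [Field Ω]
    (a : Ω) (ha : a ≠ 0) :
    Irreducible
      (((X 2 - X 0) * (X 3 - X 1) * (X 4 - X 2) * (X 0 - X 3) * (X 1 - X 4)
        - C a * ((X 1 - X 0) * (X 2 - X 1) * (X 3 - X 2) * (X 4 - X 3) * (X 0 - X 4)))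
        : MvPolynomial (Fin 5) Ω) :=
  irreducible_quintic ha

open MvPolynomial in
theorem stmt_2 (q : ℕ) (hq : ∃ p n : ℕ, Nat.Prime p ∧ 0 < n ∧ q = p ^ n)
    (Ω : Type*) [Field Ω] [IsAlgClosed Ω]
    (F : Subfield Ω) (hFcard : Nat.card F = q)
    (a : Ω) (haF : a ∈ F) (ha : a ≠ 0) :
    Irreducible
      (((X 2 - X 0) * (X 3 - X 1) * (X 4 - X 2) * (X 0 - X 3) * (X 1 - X 4)
        - C a * ((X 1 - X 0) * (X 2 - X 1) * (X 3 - X 2) * (X 4 - X 3) * (X 0 - X 4)))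
        : MvPolynomial (Fin 5) Ω) :=
  stmt_2_general Ω a ha
end

section
/- Let α, β ∈ K. There exists a nonzero x ∈ K with x = α x^{q^2} and x^q = β x^{q^2} (equivalently, the F-linear map T_{α,β} is not injective, i.e. the linear set L_{α,β} has rank less than five) if and only if α^q = β^{q+1}, N(α) = 1 and N(β) = 1. -/
/-!
Write `y = x ^ q`. The second equation says `y = β * y ^ q`; iterating it along the Frobenius orbit,
which has length five because `z ^ q ^ 5 = z` on `K`, gives `y = N(β) * y`, so `N(β) = 1`. Raising
the first equation to the power `q` and comparing gives `α ^ q = β ^ (q + 1)`, hence `N(α) ^ q = 1`.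
Conversely `α ^ q = β ^ (q + 1)` forces `α = β * β ^ q ^ 4`, and Hilbert 90 for the cyclic group `Kˣ`
(an element of norm one is a `(q - 1)`-th power) produces `x ≠ 0` with `x ^ q = β⁻¹ ^ q ^ 4 * x`,
which solves both equations.
-/

open Finset

section Telescope

variable {M : Type*} {q : ℕ}

theorem eq_pow_geomSum_mul_pow_pow [CommMonoid M] {β y : M} (h : y = β * y ^ q) (k : ℕ) :
    y = β ^ (∑ i ∈ range k, q ^ i) * y ^ q ^ k := by
  induction k with
  | zero => simp
  | succ k ih =>
    calc y = β ^ (∑ i ∈ range k, q ^ i) * (β * y ^ q) ^ q ^ k := by rwa [← h]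
      _ = β ^ (∑ i ∈ range (k + 1), q ^ i) * y ^ q ^ (k + 1) := by
        rw [sum_range_succ, pow_add, mul_pow, ← pow_mul, ← pow_succ', mul_assoc]

variable [CommMonoidWithZero M] [IsCancelMulZero M]

theorem pow_geomSum_eq_one_of_eq_mul_pow {β y : M} {n : ℕ} (hy : y ≠ 0)
    (hfix : y ^ q ^ n = y) (h : y = β * y ^ q) : β ^ (∑ i ∈ range n, q ^ i) = 1 := by
  have := eq_pow_geomSum_mul_pow_pow h n
  rw [hfix] at this
  exact (mul_eq_right₀ hy).mp this.symm

theorem pow_eq_pow_succ_of_eq_mul_pow_sq {α β x : M} (hx : x ≠ 0) (hα : x = α * x ^ q ^ 2)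
    (hβ : x ^ q = β * x ^ q ^ 2) : α ^ q = β ^ (q + 1) := by
  have hy : x ^ q = β * (x ^ q) ^ q := by rwa [← pow_mul, ← sq]
  have hyα : x ^ q = α ^ q * (x ^ q) ^ q ^ 2 := by
    rw [← pow_mul, mul_comm q, pow_mul, ← mul_pow, ← hα]
  have hyβ := eq_pow_geomSum_mul_pow_pow hy 2
  rw [show ∑ i ∈ range 2, q ^ i = q + 1 by simp [sum_range_succ, add_comm]] at hyβ
  exact mul_right_cancel₀ (pow_ne_zero _ (pow_ne_zero q hx)) (hyα.symm.trans hyβ)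

end Telescope

section Frobenius

variable {M : Type*} {q n : ℕ}

theorem eq_one_of_pow_eq_one_of_pow_pow_eq_self [Monoid M] {z : M} (hn : n ≠ 0)
    (hfix : z ^ q ^ n = z) (h : z ^ q = 1) : z = 1 := by
  obtain ⟨m, rfl⟩ := Nat.exists_eq_succ_of_ne_zero hn
  rw [← hfix, pow_succ', pow_mul, h, one_pow]

theorem eq_mul_pow_pow_of_pow_eq_pow_succ [CommMonoid M] {α β : M}
    (hα : α ^ q ^ (n + 1) = α) (hβ : β ^ q ^ (n + 1) = β) (h : α ^ q = β ^ (q + 1)) :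
    α = β * β ^ q ^ n := by
  rw [← hα, pow_succ', pow_mul, h, ← pow_mul, add_mul, one_mul, ← pow_succ', pow_add, hβ]

end Frobenius

theorem IsCyclic.exists_pow_eq_of_pow_eq_one {G : Type*} [Group G] [IsCyclic G] [Finite G]
    {d e : ℕ} (he : e ≠ 0) (hcard : Nat.card G = d * e) {c : G} (hc : c ^ e = 1) :
    ∃ y : G, y ^ d = c := by
  obtain ⟨g, hg⟩ := IsCyclic.exists_monoid_generator (α := G)
  obtain ⟨k, rfl⟩ := hg c
  have hdk : d * e ∣ k * e := by
    rw [← hcard, ← orderOf_eq_card_of_forall_mem_powers hg]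
    exact orderOf_dvd_of_pow_eq_one (by rwa [pow_mul])
  obtain ⟨j, rfl⟩ := Nat.dvd_of_mul_dvd_mul_right (Nat.pos_of_ne_zero he) hdk
  exact ⟨g ^ j, by rw [← pow_mul, mul_comm]⟩

namespace FiniteField

variable {K : Type*} [Field K] [Finite K]

theorem pow_natCard (z : K) : z ^ Nat.card K = z := by
  have := Fintype.ofFinite K
  simpa [Nat.card_eq_fintype_card] using pow_card z

theorem exists_pow_eq_mul_self_of_pow_geomSum_eq_one {q n : ℕ} (hK : Nat.card K = q ^ n) {c : K}
    (hc : c ^ (∑ i ∈ range n, q ^ i) = 1) : ∃ x : K, x ≠ 0 ∧ x ^ q = c * x := by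
  have h1 : 1 < q ^ n := hK ▸ Finite.one_lt_card
  have hn : n ≠ 0 := by rintro rfl; simp at h1
  have hq : 1 ≤ q := Nat.pos_of_ne_zero (by rintro rfl; simp [hn] at h1)
  have hS : ∑ i ∈ range n, q ^ i ≠ 0 := by
    obtain ⟨m, rfl⟩ := Nat.exists_eq_succ_of_ne_zero hn
    simp [sum_range_succ']
  have hc0 : c ≠ 0 := by rintro rfl; exact zero_ne_one ((zero_pow hS).symm.trans hc)
  obtain ⟨y, hy⟩ := IsCyclic.exists_pow_eq_of_pow_eq_one (G := Kˣ) (d := q - 1) hS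
    (by rw [Nat.card_units, hK, mul_comm, geom_sum_mul_of_one_le hq])
    (c := Units.mk0 c hc0) (Units.ext (by simpa using hc))
  refine ⟨y, y.ne_zero, ?_⟩
  calc (y : K) ^ q = (y : K) ^ (q - 1) * y := by rw [← pow_succ, Nat.sub_add_cancel hq]
    _ = c * y := by rw [← Units.val_pow_eq_pow_val, hy, Units.val_mk0]

theorem exists_ne_zero_eq_mul_pow_sq_of_pow_geomSum_eq_one {q n : ℕ}
    (hK : Nat.card K = q ^ (n + 1)) {α β : K} (hα : α = β * β ^ q ^ n)
    (hβ : β ^ (∑ i ∈ range (n + 1), q ^ i) = 1) :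
    ∃ x : K, x ≠ 0 ∧ x = α * x ^ q ^ 2 ∧ x ^ q = β * x ^ q ^ 2 := by
  have hβ0 : β ≠ 0 := by rintro rfl; simp [sum_range_succ'] at hβ
  obtain ⟨x, hx0, hxq⟩ := exists_pow_eq_mul_self_of_pow_geomSum_eq_one hK
    (c := (β ^ q ^ n)⁻¹) (by rw [inv_pow, ← pow_mul, mul_comm, pow_mul, hβ, one_pow, inv_one])
  have hxq2 : x ^ q ^ 2 = β⁻¹ * x ^ q := by
    rw [sq, pow_mul, hxq, mul_pow, inv_pow, ← pow_mul, ← pow_succ, ← hK, pow_natCard, hxq]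
  refine ⟨x, hx0, ?_, by rw [hxq2, mul_inv_cancel_left₀ hβ0]⟩
  rw [hxq2, hxq, hα]
  field_simp

end FiniteField

theorem stmt_4_general (q : ℕ) (hq : ∃ p n : ℕ, Nat.Prime p ∧ 0 < n ∧ q = p ^ n)
    (K : Type*) [Field K] (hKcard : Nat.card K = q ^ 5)
    (α β : K) :
    (∃ x : K, x ≠ 0 ∧ x = α * x ^ q ^ 2 ∧ x ^ q = β * x ^ q ^ 2) ↔
      (α ^ q = β ^ (q + 1) ∧ α ^ (1 + q + q ^ 2 + q ^ 3 + q ^ 4) = 1 ∧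
        β ^ (1 + q + q ^ 2 + q ^ 3 + q ^ 4) = 1) := by
  obtain ⟨p, n, hp, -, hqpn⟩ := hq
  have : Finite K := Nat.finite_of_card_ne_zero (by simp [hKcard, hqpn, hp.ne_zero])
  have hfix (z : K) : z ^ q ^ 5 = z := hKcard ▸ FiniteField.pow_natCard z
  have hN : ∑ i ∈ range 5, q ^ i = 1 + q + q ^ 2 + q ^ 3 + q ^ 4 := by
    simp only [sum_range_succ, sum_range_zero]; ring
  rw [← hN]
  constructor
  · rintro ⟨x, hx0, hxα, hxβ⟩
    have hNβ := pow_geomSum_eq_one_of_eq_mul_pow (pow_ne_zero q hx0) (hfix _)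
      (show x ^ q = β * (x ^ q) ^ q by rwa [← pow_mul, ← sq])
    have hαβ := pow_eq_pow_succ_of_eq_mul_pow_sq hx0 hxα hxβ
    refine ⟨hαβ, eq_one_of_pow_eq_one_of_pow_pow_eq_self (by norm_num) (hfix _) ?_, hNβ⟩
    rw [← pow_mul, mul_comm, pow_mul, hαβ, ← pow_mul, mul_comm, pow_mul, hNβ, one_pow]
  · rintro ⟨hαβ, -, hNβ⟩
    exact FiniteField.exists_ne_zero_eq_mul_pow_sq_of_pow_geomSum_eq_one hKcard
      (eq_mul_pow_pow_of_pow_eq_pow_succ (hfix α) (hfix β) hαβ) hNβ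

theorem stmt_4 (q : ℕ) (hq : ∃ p n : ℕ, Nat.Prime p ∧ 0 < n ∧ q = p ^ n)
    (K : Type*) [Field K] (F : Subfield K)
    (hFcard : Nat.card F = q) (hKcard : Nat.card K = q ^ 5)
    (α β : K) :
    (∃ x : K, x ≠ 0 ∧ x = α * x ^ q ^ 2 ∧ x ^ q = β * x ^ q ^ 2) ↔
      (α ^ q = β ^ (q + 1) ∧ α ^ (1 + q + q ^ 2 + q ^ 3 + q ^ 4) = 1 ∧
        β ^ (1 + q + q ^ 2 + q ^ 3 + q ^ 4) = 1) :=
  stmt_4_general q hq K hKcard α β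
end

section
/- Let α, β ∈ K with αβ ≠ 0 and α^q ≠ β^{q+1}. If α^{q^4} β^{q^2+q+1} − α^{q^4+q^2} β − α^{q^4+q} β^{q^2} + N(α) − β^q α^{q^3+1} + 1 = 0, then α^q/β^{q+1} ∈ F, i.e. (α^q/β^{q+1})^q = α^q/β^{q+1}. -/
/-!
Write `E` for the left-hand side of the hypothesis and `σ x = x ^ q`. Since `x ^ q ^ 5 = x`,
`σ` is a ring endomorphism permuting `α, α ^ q, …, α ^ q ^ 4` cyclically, and `E - σ E` factors as
`(α ^ q ^ 4 * β - α * β ^ q ^ 3) * σ (β ^ (q + 1) - α ^ q)`. As `E = 0` and the second factor is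
nonzero, `α ^ q ^ 4 * β = α * β ^ q ^ 3`; applying `σ²` gives `α ^ q * β ^ q ^ 2 = α ^ q ^ 2 * β`,
which says that `α ^ q / β ^ (q + 1)` is fixed by `σ`.
-/

def cycleExpr {R : Type*} [CommRing R] (q : ℕ) (α β : R) : R :=
  α ^ q ^ 4 * β ^ (q ^ 2 + q + 1) - α ^ (q ^ 4 + q ^ 2) * β - α ^ (q ^ 4 + q) * β ^ q ^ 2
    + α ^ (1 + q + q ^ 2 + q ^ 3 + q ^ 4) - β ^ q * α ^ (q ^ 3 + 1) + 1

section FrobeniusCycle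

variable {R : Type*} [CommRing R] {q : ℕ}

theorem cycleExpr_sub_pow (φ : R →+* R) (hφ : ∀ x, φ x = x ^ q)
    (hper : ∀ x : R, x ^ q ^ 5 = x) (α β : R) :
    cycleExpr q α β - cycleExpr q α β ^ q
      = (α ^ q ^ 4 * β - α * β ^ q ^ 3) * (β ^ (q + 1) - α ^ q) ^ q := by
  have hshift : ∀ (x : R) (k : ℕ), φ (x ^ q ^ k) = x ^ q ^ (k + 1) := fun x k => by
    rw [hφ, ← pow_mul, pow_succ]
  have hE : cycleExpr q α β = α ^ q ^ 4 * (β ^ q ^ 2 * β ^ q ^ 1 * β) - α ^ q ^ 4 * α ^ q ^ 2 * β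
      - α ^ q ^ 4 * α ^ q ^ 1 * β ^ q ^ 2 + α * α ^ q ^ 1 * α ^ q ^ 2 * α ^ q ^ 3 * α ^ q ^ 4
      - β ^ q ^ 1 * (α ^ q ^ 3 * α) + 1 := by
    unfold cycleExpr; ring
  rw [← hφ (cycleExpr q α β), ← hφ (β ^ (q + 1) - α ^ q), hE]
  simp only [map_add, map_sub, map_mul, map_one, map_pow, hshift, hper]
  simp only [hφ]
  ring

theorem pow_pow_four_mul_eq_of_cycleExpr_eq_zero [NoZeroDivisors R] (φ : R →+* R)
    (hφ : ∀ x, φ x = x ^ q) (hper : ∀ x : R, x ^ q ^ 5 = x) {α β : R}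
    (hE : cycleExpr q α β = 0) (hne : α ^ q ≠ β ^ (q + 1)) :
    α ^ q ^ 4 * β = α * β ^ q ^ 3 := by
  have hprod := cycleExpr_sub_pow φ hφ hper α β
  rw [← hφ (cycleExpr q α β), hE, map_zero, sub_zero, eq_comm] at hprod
  rcases mul_eq_zero.mp hprod with h | h
  · exact sub_eq_zero.mp h
  · exact absurd (sub_eq_zero.mp (eq_zero_of_pow_eq_zero h)).symm hne

theorem pow_mul_pow_sq_eq_of_pow_pow_four_mul_eq (hper : ∀ x : R, x ^ q ^ 5 = x) {α β : R}
    (h : α ^ q ^ 4 * β = α * β ^ q ^ 3) : α ^ q * β ^ q ^ 2 = α ^ q ^ 2 * β := by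
  have h2 := congrArg (· ^ q ^ 2) h
  simp only [mul_pow, ← pow_mul] at h2
  rwa [show q ^ 4 * q ^ 2 = q ^ 5 * q by ring, show q ^ 3 * q ^ 2 = q ^ 5 by ring,
    pow_mul, hper, hper] at h2

end FrobeniusCycle

theorem div_pow_eq_self_of_pow_mul_pow_sq_eq {K : Type*} [Field K] {q : ℕ} {α β : K} (hβ : β ≠ 0)
    (h : α ^ q * β ^ q ^ 2 = α ^ q ^ 2 * β) :
    (α ^ q / β ^ (q + 1)) ^ q = α ^ q / β ^ (q + 1) := by
  have hβq : β ^ (q + 1) ≠ 0 := pow_ne_zero _ hβ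
  rw [div_pow, div_eq_div_iff (pow_ne_zero _ hβq) hβq, ← pow_mul, ← pow_mul]
  linear_combination (-(β ^ q)) * h

theorem stmt_10_general (q : ℕ) (hq : ∃ p n : ℕ, Nat.Prime p ∧ 0 < n ∧ q = p ^ n)
    (K : Type*) [Field K]
    (hKcard : Nat.card K = q ^ 5)
    (α β : K) (hαβ : α * β ≠ 0) (hne : α ^ q ≠ β ^ (q + 1))
    (heq : α ^ q ^ 4 * β ^ (q ^ 2 + q + 1) - α ^ (q ^ 4 + q ^ 2) * β
        - α ^ (q ^ 4 + q) * β ^ q ^ 2 + α ^ (1 + q + q ^ 2 + q ^ 3 + q ^ 4)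
        - β ^ q * α ^ (q ^ 3 + 1) + 1 = 0) :
    (α ^ q / β ^ (q + 1)) ^ q = α ^ q / β ^ (q + 1) := by
  obtain ⟨p, n, hp, -, rfl⟩ := hq
  have : Fact p.Prime := ⟨hp⟩
  have : Finite K := Nat.finite_of_card_ne_zero (by rw [hKcard]; positivity [hp.pos])
  have := Fintype.ofFinite K
  have hcard : Fintype.card K = p ^ (n * 5) := by rw [← Nat.card_eq_fintype_card, hKcard, pow_mul]
  have : CharP K p := charP_of_card_eq_prime_pow hcard
  have hper : ∀ x : K, x ^ (p ^ n) ^ 5 = x := fun x => by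
    rw [← pow_mul, ← hcard, FiniteField.pow_card]
  refine div_pow_eq_self_of_pow_mul_pow_sq_eq (right_ne_zero_of_mul hαβ) ?_
  refine pow_mul_pow_sq_eq_of_pow_pow_four_mul_eq hper ?_
  exact pow_pow_four_mul_eq_of_cycleExpr_eq_zero (iterateFrobenius K p n)
    (fun _ => rfl) hper heq hne

theorem stmt_10 (q : ℕ) (hq : ∃ p n : ℕ, Nat.Prime p ∧ 0 < n ∧ q = p ^ n)
    (K : Type*) [Field K] (F : Subfield K)
    (hFcard : Nat.card F = q) (hKcard : Nat.card K = q ^ 5)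
    (α β : K) (hαβ : α * β ≠ 0) (hne : α ^ q ≠ β ^ (q + 1))
    (heq : α ^ q ^ 4 * β ^ (q ^ 2 + q + 1) - α ^ (q ^ 4 + q ^ 2) * β
        - α ^ (q ^ 4 + q) * β ^ q ^ 2 + α ^ (1 + q + q ^ 2 + q ^ 3 + q ^ 4)
        - β ^ q * α ^ (q ^ 3 + 1) + 1 = 0) :
    (α ^ q / β ^ (q + 1)) ^ q = α ^ q / β ^ (q + 1) :=
  stmt_10_general q hq K hKcard α β hαβ hne heq
end

section
/- Let β ∈ K with β ≠ 0, let λ ∈ F with λ ≠ 0, and let α ∈ K satisfy α^q = λ β^{q+1}. Then α^{q^4} β^{q^2+q+1} − α^{q^4+q^2} β − α^{q^4+q} β^{q^2} + N(α) − β^q α^{q^3+1} + 1 = 0 holds if and only if λ^5 N(β)^2 + λ(1 − 3λ) N(β) + 1 = 0. -/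
/-!
Write `β_i = β ^ q ^ i`. Raising `α ^ q = l * β ^ (q + 1)` to the `q`-th power and using `l ^ q = l`
gives `α ^ q ^ i = l * β_i * β_(i-1)` for `i ≥ 1`, and since `x ^ q ^ 5 = x` on `K` also
`α = l * β_0 * β_4`. Substituting these turns the left-hand side into a polynomial in `l` and the
`β_i`, which collapses to `l ^ 5 * N(β) ^ 2 + l * (1 - 3 * l) * N(β) + 1` with
`N(β) = β_0 β_1 β_2 β_3 β_4`.
-/

theorem FiniteField.pow_natCard_s11 {K : Type*} [Field K] [Finite K] (x : K) :
    x ^ Nat.card K = x := by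
  have := Fintype.ofFinite K
  rw [Nat.card_eq_fintype_card, FiniteField.pow_card]

theorem Subfield.pow_natCard_of_mem {K : Type*} [Field K] (F : Subfield K) [Finite F] {x : K}
    (hx : x ∈ F) : x ^ Nat.card F = x :=
  congrArg Subtype.val (FiniteField.pow_natCard_s11 (⟨x, hx⟩ : F))

theorem pow_pow_succ_eq_of_pow_eq {M : Type*} [CommMonoid M] {q : ℕ} {α β l : M}
    (hl : l ^ q = l) (hα : α ^ q = l * β ^ (q + 1)) (i : ℕ) :
    α ^ q ^ (i + 1) = l * (β ^ q ^ (i + 1) * β ^ q ^ i) := by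
  induction i with
  | zero => simpa [pow_succ] using hα
  | succ i ih =>
    rw [pow_succ q (i + 1), pow_mul, ih, mul_pow, hl, mul_pow, ← pow_mul, ← pow_mul, ← pow_succ,
      ← pow_succ]

theorem frobenius_expr_eq_norm_quadratic {R : Type*} [CommRing R] {q : ℕ} {α β l : R}
    (hl : l ^ q = l) (hα : α ^ q = l * β ^ (q + 1))
    (hα5 : α ^ q ^ 5 = α) (hβ5 : β ^ q ^ 5 = β) :
    α ^ q ^ 4 * β ^ (q ^ 2 + q + 1) - α ^ (q ^ 4 + q ^ 2) * β
        - α ^ (q ^ 4 + q) * β ^ q ^ 2 + α ^ (1 + q + q ^ 2 + q ^ 3 + q ^ 4)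
        - β ^ q * α ^ (q ^ 3 + 1) + 1 =
      l ^ 5 * (β ^ (1 + q + q ^ 2 + q ^ 3 + q ^ 4)) ^ 2 +
        l * (1 - 3 * l) * β ^ (1 + q + q ^ 2 + q ^ 3 + q ^ 4) + 1 := by
  have hα' := pow_pow_succ_eq_of_pow_eq hl hα
  have hα0 : α = l * (β * β ^ q ^ 4) := by rw [← hα5, hα' 4, hβ5]
  have hα1 : α ^ q = l * (β ^ q * β) := by simpa using hα' 0
  simp only [pow_add, pow_one]
  rw [hα' 3, hα' 2, hα' 1, hα1, hα0]
  ring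

theorem stmt_11_general (q : ℕ) (hq : ∃ p n : ℕ, Nat.Prime p ∧ 0 < n ∧ q = p ^ n)
    (K : Type*) [Field K] (F : Subfield K)
    (hFcard : Nat.card F = q) (hKcard : Nat.card K = q ^ 5)
    (β : K) (l : K) (hlF : l ∈ F)
    (α : K) (hα : α ^ q = l * β ^ (q + 1)) :
    (α ^ q ^ 4 * β ^ (q ^ 2 + q + 1) - α ^ (q ^ 4 + q ^ 2) * β
        - α ^ (q ^ 4 + q) * β ^ q ^ 2 + α ^ (1 + q + q ^ 2 + q ^ 3 + q ^ 4)
        - β ^ q * α ^ (q ^ 3 + 1) + 1 = 0) ↔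
      l ^ 5 * (β ^ (1 + q + q ^ 2 + q ^ 3 + q ^ 4)) ^ 2 +
        l * (1 - 3 * l) * β ^ (1 + q + q ^ 2 + q ^ 3 + q ^ 4) + 1 = 0 := by
  have hq0 : q ≠ 0 := by
    obtain ⟨p, n, hp, -, rfl⟩ := hq
    exact pow_ne_zero n hp.ne_zero
  have : Finite K := Nat.finite_of_card_ne_zero (hKcard ▸ pow_ne_zero 5 hq0)
  have hl : l ^ q = l := hFcard ▸ F.pow_natCard_of_mem hlF
  rw [frobenius_expr_eq_norm_quadratic hl hα (hKcard ▸ FiniteField.pow_natCard_s11 α)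
    (hKcard ▸ FiniteField.pow_natCard_s11 β)]

theorem stmt_11 (q : ℕ) (hq : ∃ p n : ℕ, Nat.Prime p ∧ 0 < n ∧ q = p ^ n)
    (K : Type*) [Field K] (F : Subfield K)
    (hFcard : Nat.card F = q) (hKcard : Nat.card K = q ^ 5)
    (β : K) (hβ : β ≠ 0) (l : K) (hlF : l ∈ F) (hl0 : l ≠ 0)
    (α : K) (hα : α ^ q = l * β ^ (q + 1)) :
    (α ^ q ^ 4 * β ^ (q ^ 2 + q + 1) - α ^ (q ^ 4 + q ^ 2) * β
        - α ^ (q ^ 4 + q) * β ^ q ^ 2 + α ^ (1 + q + q ^ 2 + q ^ 3 + q ^ 4)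
        - β ^ q * α ^ (q ^ 3 + 1) + 1 = 0) ↔
      l ^ 5 * (β ^ (1 + q + q ^ 2 + q ^ 3 + q ^ 4)) ^ 2 +
        l * (1 - 3 * l) * β ^ (1 + q + q ^ 2 + q ^ 3 + q ^ 4) + 1 = 0 :=
  stmt_11_general q hq K F hFcard hKcard β l hlF α hα
end

section
/- Let k be a field and let λ, N ∈ k with λ ≠ 0 and λ ≠ 1. Then it is impossible that both N^8 λ^{10} (1−λ)^{10} − N^4 λ^5 (1−λ)^5 (λ^2 N − 1)^5 + (λ^2 N − 1)^{10} = 0 and λ^5 N^2 + λ(1 − 3λ) N + 1 = 0 hold. (The resultant of these two polynomials with respect to N is λ^{28}(λ−1)^{22}.) -/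
/-!
The curve `l⁵n² + l(1 - 3l)n + 1 = 0` is rational: with `t = l(l²n - 1)/(1 - l)` it is
parametrized by `l = -t/(t - 1)²`, `n = (1 - t)⁵/t`. Along this parametrization the first
polynomial equals `(t² - t + 1)¹¹`, while `1 - l = (t² - t + 1)/(t - 1)²`, so the first
polynomial can only vanish on the curve where `l = 1`.
-/

section
variable {k : Type*} [Field k]

lemma exists_param_of_eq_zero {l n : k} (hl1 : l ≠ 1)
    (hQ : l ^ 5 * n ^ 2 + l * (1 - 3 * l) * n + 1 = 0) :
    ∃ t : k, t ≠ 1 ∧ l = -t / (t - 1) ^ 2 ∧ n = (1 - t) ^ 5 / t := by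
  have hl0 : l ≠ 0 := by
    rintro rfl
    norm_num at hQ
  have h1l : 1 - l ≠ 0 := sub_ne_zero.2 hl1.symm
  set t := l * (l ^ 2 * n - 1) / (1 - l) with ht
  have hdef : (1 - l) * t = l * (l ^ 2 * n - 1) := by
    rw [ht]
    field_simp
  have hrel : l * (t - 1) ^ 2 + t = 0 := by
    have : (1 - l) ^ 2 * (l * (t - 1) ^ 2 + t) =
        l ^ 2 * (l ^ 5 * n ^ 2 + l * (1 - 3 * l) * n + 1) := by
      rw [ht]
      field_simp
      ring
    rw [hQ, mul_zero] at this
    exact (mul_eq_zero.1 this).resolve_left (pow_ne_zero 2 h1l)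
  have ht1 : t ≠ 1 := by
    intro h
    rw [h] at hrel
    norm_num at hrel
  have ht0 : t ≠ 0 := by
    intro h
    rw [h] at hrel
    norm_num at hrel
    exact hl0 hrel
  have hl : l = -t / (t - 1) ^ 2 := by
    rw [eq_div_iff (pow_ne_zero 2 (sub_ne_zero.2 ht1))]
    linear_combination hrel
  have hln : l ^ 2 * n = t * (1 - t) := by
    have : l * (l ^ 2 * n - t * (1 - t)) = 0 := by linear_combination hrel - hdef
    linear_combination (mul_eq_zero.1 this).resolve_left hl0
  refine ⟨t, ht1, hl, ?_⟩
  rw [hl] at hln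
  rw [eq_div_iff ht0]
  field_simp at hln
  linear_combination hln

variable {t l n : k}

lemma eq_pow_of_param (ht1 : t ≠ 1) (hl : l = -t / (t - 1) ^ 2) (hn : n = (1 - t) ^ 5 / t) :
    n ^ 8 * l ^ 10 * (1 - l) ^ 10 - n ^ 4 * l ^ 5 * (1 - l) ^ 5 * (l ^ 2 * n - 1) ^ 5 +
      (l ^ 2 * n - 1) ^ 10 = (t ^ 2 - t + 1) ^ 11 := by
  have : t - 1 ≠ 0 := sub_ne_zero.2 ht1
  subst hl hn
  field_simp
  ring

lemma one_sub_eq_of_param (ht1 : t ≠ 1) (hl : l = -t / (t - 1) ^ 2) :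
    1 - l = (t ^ 2 - t + 1) / (t - 1) ^ 2 := by
  have : t - 1 ≠ 0 := sub_ne_zero.2 ht1
  subst hl
  field_simp
  ring

end

theorem stmt_14_general (k : Type*) [Field k] (l n : k) (hl1 : l ≠ 1) :
    ¬ (n ^ 8 * l ^ 10 * (1 - l) ^ 10 -
          n ^ 4 * l ^ 5 * (1 - l) ^ 5 * (l ^ 2 * n - 1) ^ 5 +
          (l ^ 2 * n - 1) ^ 10 = 0 ∧
        l ^ 5 * n ^ 2 + l * (1 - 3 * l) * n + 1 = 0) := by
  rintro ⟨hP, hQ⟩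
  obtain ⟨t, ht1, hl, hn⟩ := exists_param_of_eq_zero hl1 hQ
  rw [eq_pow_of_param ht1 hl hn] at hP
  have hc : t ^ 2 - t + 1 = 0 := pow_eq_zero_iff (by norm_num) |>.1 hP
  have : 1 - l = 0 := by rw [one_sub_eq_of_param ht1 hl, hc, zero_div]
  exact hl1 (sub_eq_zero.1 this).symm

theorem stmt_14 (k : Type*) [Field k] (l n : k) (hl0 : l ≠ 0) (hl1 : l ≠ 1) :
    ¬ (n ^ 8 * l ^ 10 * (1 - l) ^ 10 -
          n ^ 4 * l ^ 5 * (1 - l) ^ 5 * (l ^ 2 * n - 1) ^ 5 +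
          (l ^ 2 * n - 1) ^ 10 = 0 ∧
        l ^ 5 * n ^ 2 + l * (1 - 3 * l) * n + 1 = 0) :=
  stmt_14_general k l n hl1
end

section
/- Let η ∈ K with η ≠ 0 and N(η)^2 − N(η) + 1 = 0. Then there do not exist λ ∈ F with λ ≠ 0 and λ ≠ 1 and β ∈ K with β ≠ 0 such that (λ^2 N(β) − 1) · η = λ(1 − λ) β^{q^3+q^2+q+1} and λ^5 N(β)^2 + λ(1 − 3λ) N(β) + 1 = 0. (Consequently, a Sheekey linear set L_2^η with N(η)^2 − N(η) + 1 = 0 is not of the form L_{α,β}.) -/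
/-!
Write `n = N(η)`, `N = N(β)` and `t = λ²N`. Since `λ`, `1 - λ` and `λ²N - 1` lie in `F`,
raising the first relation to the norm exponent gives `(t - 1)⁵ n = λ⁵ (1 - λ)⁵ N⁴`. The second
relation says `(λt - 1)² = (λ - 1)(t - 1)`, a rational curve parametrized by `λ = r(1 - r)`,
`t = (r - 1)/r²`. In this parameter the norm relation collapses to `r n = r - 1`, so `r` is again
a root of `X² - X + 1`, which forces `λ = r - r² = 1`.
-/

section NormExponent

variable {M : Type*} [Monoid M] {q : ℕ} {x : M}

theorem pow_norm_exponent_pow_eq (hx : x ^ q ^ 5 = x) :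
    (x ^ (1 + q + q ^ 2 + q ^ 3 + q ^ 4)) ^ q = x ^ (1 + q + q ^ 2 + q ^ 3 + q ^ 4) :=
  calc (x ^ (1 + q + q ^ 2 + q ^ 3 + q ^ 4)) ^ q
      = x ^ (q + q ^ 2 + q ^ 3 + q ^ 4) * x ^ q ^ 5 := by rw [← pow_mul, ← pow_add]; ring_nf
    _ = x ^ (1 + q + q ^ 2 + q ^ 3 + q ^ 4) := by rw [hx, ← pow_succ]; ring_nf

theorem pow_norm_exponent_of_pow_eq (hx : x ^ q = x) :
    x ^ (1 + q + q ^ 2 + q ^ 3 + q ^ 4) = x ^ 5 := by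
  have hpow : ∀ k, x ^ q ^ k = x := fun k ↦ by
    induction k with
    | zero => rw [pow_zero, pow_one]
    | succ k ih => rw [pow_succ, pow_mul, ih, hx]
  rw [pow_add, pow_add, pow_add, pow_add, hx, hpow 2, hpow 3, hpow 4]
  simp only [pow_succ, pow_zero, one_mul]

theorem pow_pow_norm_exponent (hx : x ^ q ^ 5 = x) :
    (x ^ (q ^ 3 + q ^ 2 + q + 1)) ^ (1 + q + q ^ 2 + q ^ 3 + q ^ 4) =
      (x ^ (1 + q + q ^ 2 + q ^ 3 + q ^ 4)) ^ 4 := by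
  have hpow : ∀ k, x ^ (k * q ^ 5) = x ^ k := fun k ↦ by rw [mul_comm, pow_mul, hx]
  calc (x ^ (q ^ 3 + q ^ 2 + q + 1)) ^ (1 + q + q ^ 2 + q ^ 3 + q ^ 4)
      = x ^ (1 + 2 * q + 3 * q ^ 2 + 4 * q ^ 3 + 4 * q ^ 4) *
          x ^ ((3 + 2 * q + q ^ 2) * q ^ 5) := by rw [← pow_mul, ← pow_add]; ring_nf
    _ = (x ^ (1 + q + q ^ 2 + q ^ 3 + q ^ 4)) ^ 4 := by rw [hpow, ← pow_add, ← pow_mul]; ring_nf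

end NormExponent

theorem pow_norm_exponent_of_linear_relation {R : Type*} [CommRing R] {q : ℕ} (φ : R →+* R)
    (hφ : ∀ x : R, x ^ q = φ x) (hR : ∀ x : R, x ^ q ^ 5 = x) {l β η : R} (hl : l ^ q = l)
    (hlin : (l ^ 2 * β ^ (1 + q + q ^ 2 + q ^ 3 + q ^ 4) - 1) * η =
      l * (1 - l) * β ^ (q ^ 3 + q ^ 2 + q + 1)) :
    (l ^ 2 * β ^ (1 + q + q ^ 2 + q ^ 3 + q ^ 4) - 1) ^ 5 * η ^ (1 + q + q ^ 2 + q ^ 3 + q ^ 4) =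
      l ^ 5 * (1 - l) ^ 5 * (β ^ (1 + q + q ^ 2 + q ^ 3 + q ^ 4)) ^ 4 := by
  set N := β ^ (1 + q + q ^ 2 + q ^ 3 + q ^ 4)
  have hN : N ^ q = N := pow_norm_exponent_pow_eq (hR β)
  have hM : (l ^ 2 * N - 1) ^ q = l ^ 2 * N - 1 := by
    rw [hφ, map_sub, map_mul, map_pow, map_one, ← hφ, ← hφ, hl, hN]
  have hl' : (1 - l) ^ q = 1 - l := by
    rw [hφ, map_sub, map_one, ← hφ, hl]
  have h := congrArg (· ^ (1 + q + q ^ 2 + q ^ 3 + q ^ 4)) hlin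
  simp only [mul_pow] at h
  rwa [pow_norm_exponent_of_pow_eq hM, pow_norm_exponent_of_pow_eq hl,
    pow_norm_exponent_of_pow_eq hl', pow_pow_norm_exponent (hR β)] at h

section NormRelations

variable {K : Type*} [Field K]

theorem exists_rational_param_of_sq_mul_sub_one_eq {l t : K} (hl : l ≠ 1)
    (h : (l * t - 1) ^ 2 = (l - 1) * (t - 1)) :
    ∃ r : K, r ≠ 0 ∧ l = r * (1 - r) ∧ t = (r - 1) / r ^ 2 := by
  have hl' : l - 1 ≠ 0 := sub_ne_zero.mpr hl
  have ht : t - 1 ≠ 0 := by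
    intro ht
    rw [ht, mul_zero, show t = 1 by linear_combination ht, mul_one] at h
    exact hl' (pow_eq_zero_iff two_ne_zero |>.mp h)
  have hs : l * t - 1 ≠ 0 := by
    intro hs
    rw [hs, zero_pow two_ne_zero] at h
    exact mul_ne_zero hl' ht h.symm
  refine ⟨(l * t - 1) / (t - 1), div_ne_zero hs ht, ?_, ?_⟩
  · field_simp
    linear_combination h
  · rw [eq_div_iff (pow_ne_zero 2 (div_ne_zero hs ht))]
    field_simp
    linear_combination t * h

theorem false_of_norm_relations {n l N : K} (hn : n ^ 2 - n + 1 = 0)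
    (hquad : l ^ 5 * N ^ 2 + l * (1 - 3 * l) * N + 1 = 0)
    (hnorm : (l ^ 2 * N - 1) ^ 5 * n = l ^ 5 * (1 - l) ^ 5 * N ^ 4)
    (hl0 : l ≠ 0) (hl1 : l ≠ 1) : False := by
  obtain ⟨r, hr0, hl, ht⟩ := exists_rational_param_of_sq_mul_sub_one_eq (t := l ^ 2 * N) hl1
    (by linear_combination l * hquad)
  have h1l : 1 - l ≠ 0 := sub_ne_zero.mpr hl1.symm
  have hr1 : 1 - r ≠ 0 := fun h ↦ hl0 (by rw [hl, h, mul_zero])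
  have ht1 : l ^ 2 * N - 1 = -(1 - l) / r ^ 2 := by
    rw [ht, hl]; field_simp; ring
  have hnorm' : -(l ^ 3 * n) = r ^ 2 * (r - 1) ^ 4 := by
    have h : l ^ 3 * (l ^ 2 * N - 1) ^ 5 * n = (1 - l) ^ 5 * (l ^ 2 * N) ^ 4 := by
      linear_combination l ^ 3 * hnorm
    rw [ht1, ht] at h
    field_simp at h
    exact h
  have hrn : r * n = r - 1 :=
    mul_left_cancel₀ (mul_ne_zero (pow_ne_zero 2 hr0) (pow_ne_zero 3 hr1)) (by
      rw [hl] at hnorm'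
      linear_combination -hnorm')
  have hr : r ^ 2 - r + 1 = 0 := by linear_combination r ^ 2 * hn + (1 - r * n) * hrn
  exact hl1 (by rw [hl]; linear_combination -hr)

end NormRelations

theorem stmt_15_general (q : ℕ) (hq : ∃ p n : ℕ, Nat.Prime p ∧ 0 < n ∧ q = p ^ n)
    (K : Type*) [Field K] (F : Subfield K)
    (hFcard : Nat.card F = q) (hKcard : Nat.card K = q ^ 5)
    (η : K)
    (hN : (η ^ (1 + q + q ^ 2 + q ^ 3 + q ^ 4)) ^ 2 -
        η ^ (1 + q + q ^ 2 + q ^ 3 + q ^ 4) + 1 = 0) :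
    ¬ ∃ l β : K, l ∈ F ∧ l ≠ 0 ∧ l ≠ 1 ∧ β ≠ 0 ∧
        (l ^ 2 * β ^ (1 + q + q ^ 2 + q ^ 3 + q ^ 4) - 1) * η =
          l * (1 - l) * β ^ (q ^ 3 + q ^ 2 + q + 1) ∧
        l ^ 5 * (β ^ (1 + q + q ^ 2 + q ^ 3 + q ^ 4)) ^ 2 +
          l * (1 - 3 * l) * β ^ (1 + q + q ^ 2 + q ^ 3 + q ^ 4) + 1 = 0 := by
  rintro ⟨l, β, hlF, hl0, hl1, -, hlin, hquad⟩
  obtain ⟨p, m, hp, -, hqpm⟩ := hq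
  have : Fact p.Prime := ⟨hp⟩
  have hq0 : q ≠ 0 := hqpm ▸ pow_ne_zero m hp.ne_zero
  have : Fintype K :=
    @Fintype.ofFinite K (Nat.finite_of_card_ne_zero (hKcard ▸ pow_ne_zero 5 hq0))
  have : Fintype F := @Fintype.ofFinite F (Nat.finite_of_card_ne_zero (hFcard ▸ hq0))
  have : CharP K p := charP_of_card_eq_prime_pow (f := m * 5) <| by
    rw [← Nat.card_eq_fintype_card, hKcard, hqpm, pow_mul]
  have hK : ∀ x : K, x ^ q ^ 5 = x := fun x ↦ by
    simpa [← Nat.card_eq_fintype_card, hKcard] using FiniteField.pow_card x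
  have hl : l ^ q = l := by
    simpa [← Nat.card_eq_fintype_card, hFcard] using
      congrArg Subtype.val (FiniteField.pow_card (⟨l, hlF⟩ : F))
  have hfrob : ∀ x : K, x ^ q = iterateFrobenius K p m x := fun x ↦ by
    rw [iterateFrobenius_def, hqpm]
  exact false_of_norm_relations hN hquad
    (pow_norm_exponent_of_linear_relation _ hfrob hK hl hlin) hl0 hl1

theorem stmt_15 (q : ℕ) (hq : ∃ p n : ℕ, Nat.Prime p ∧ 0 < n ∧ q = p ^ n)
    (K : Type*) [Field K] (F : Subfield K)
    (hFcard : Nat.card F = q) (hKcard : Nat.card K = q ^ 5)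
    (η : K) (hη : η ≠ 0)
    (hN : (η ^ (1 + q + q ^ 2 + q ^ 3 + q ^ 4)) ^ 2 -
        η ^ (1 + q + q ^ 2 + q ^ 3 + q ^ 4) + 1 = 0) :
    ¬ ∃ l β : K, l ∈ F ∧ l ≠ 0 ∧ l ≠ 1 ∧ β ≠ 0 ∧
        (l ^ 2 * β ^ (1 + q + q ^ 2 + q ^ 3 + q ^ 4) - 1) * η =
          l * (1 - l) * β ^ (q ^ 3 + q ^ 2 + q + 1) ∧
        l ^ 5 * (β ^ (1 + q + q ^ 2 + q ^ 3 + q ^ 4)) ^ 2 +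
          l * (1 - 3 * l) * β ^ (1 + q + q ^ 2 + q ^ 3 + q ^ 4) + 1 = 0 :=
  stmt_15_general q hq K F hFcard hKcard η hN
end
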